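/- arXiv:1810.06398 — 7 statements merged into one kernel-verified Lean document; each statement's English description precedes it below -/
import Mathlib

section
/- In any lattice L, if two vectors x, y ∈ L^n are comonotone, then they are dually generalized comonotone, i.e., for all i,j: (x_i ∧ y_i) ∨ (x_j ∧ y_j) = (x_i ∨ x_j) ∧ (y_i ∨ y_j). -/
theorem inf_sup_inf_eq_sup_inf_sup_of_le {L : Type*} [Lattice L] {a b c d : L}
    (hab : a ≤ b) (hcd : c ≤ d) : a ⊓ c ⊔ b ⊓ d = (a ⊔ b) ⊓ (c ⊔ d) := by
  rw [sup_eq_right.2 (inf_le_inf hab hcd), sup_eq_right.2 hab, sup_eq_right.2 hcd]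

theorem inf_sup_inf_eq_sup_inf_sup_of_ge {L : Type*} [Lattice L] {a b c d : L}
    (hba : b ≤ a) (hdc : d ≤ c) : a ⊓ c ⊔ b ⊓ d = (a ⊔ b) ⊓ (c ⊔ d) := by
  rw [sup_comm, sup_comm a, sup_comm c]
  exact inf_sup_inf_eq_sup_inf_sup_of_le hba hdc

theorem comonotone_implies_dual_gcomonotone {L : Type*} [Lattice L] {n : ℕ}
    (x y : Fin n → L)
    (hcom : ∀ i j : Fin n, (x i ≤ x j ∧ y i ≤ y j) ∨ (x j ≤ x i ∧ y j ≤ y i)) :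
    ∀ i j : Fin n, (x i ⊓ y i) ⊔ (x j ⊓ y j) = (x i ⊔ x j) ⊓ (y i ⊔ y j) := by
  intro i j
  rcases hcom i j with ⟨hx, hy⟩ | ⟨hx, hy⟩
  · exact inf_sup_inf_eq_sup_inf_sup_of_le hx hy
  · exact inf_sup_inf_eq_sup_inf_sup_of_ge hx hy
end

section
/- On any distributive lattice L, generalized comonotonicity is self-dual: two vectors x, y ∈ L^n are g-comonotone (for all i,j: (x_i ∨ y_i) ∧ (x_j ∨ y_j) = (x_i ∧ x_j) ∨ (y_i ∧ y_j)) if and only if they are dually g-comonotone (for all i,j: (x_i ∧ y_i) ∨ (x_j ∧ y_j) = (x_i ∨ x_j) ∧ (y_i ∨ y_j)). -/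
/-!
Both conditions only involve the quadruple `(a, b, c, d) = (x i, y i, x j, y j)`, and the dual
condition for it is the primal condition for `(a, c, b, d)`; so it suffices to show that
`(a ⊔ b) ⊓ (c ⊔ d) = a ⊓ c ⊔ b ⊓ d` implies the same identity with `b` and `c` swapped.
Expanding by distributivity, this amounts to `a ⊓ d ≤ a ⊓ b ⊔ c ⊓ d` (and symmetrically for
`b ⊓ c`), which follows by meeting `a ⊓ d ≤ (a ⊔ b) ⊓ (c ⊔ d) = a ⊓ c ⊔ b ⊓ d` with `a ⊓ d`.
-/

section
variable {L : Type*} [DistribLattice L] {a b c d : L}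

theorem inf_le_inf_sup_inf_of_sup_inf_sup_eq (h : (a ⊔ b) ⊓ (c ⊔ d) = a ⊓ c ⊔ b ⊓ d) :
    a ⊓ d ≤ a ⊓ b ⊔ c ⊓ d := by
  have had : a ⊓ d ≤ a ⊓ c ⊔ b ⊓ d := h ▸ inf_le_inf le_sup_left le_sup_right
  calc a ⊓ d = a ⊓ d ⊓ (a ⊓ c) ⊔ a ⊓ d ⊓ (b ⊓ d) := by rw [← inf_sup_left, inf_eq_left.2 had]
    _ ≤ a ⊓ b ⊔ c ⊓ d := sup_le (by order) (by order)

theorem sup_inf_sup_eq_swap (h : (a ⊔ b) ⊓ (c ⊔ d) = a ⊓ c ⊔ b ⊓ d) :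
    (a ⊔ c) ⊓ (b ⊔ d) = a ⊓ b ⊔ c ⊓ d := by
  have had := inf_le_inf_sup_inf_of_sup_inf_sup_eq h
  have hbc : b ⊓ c ≤ b ⊓ a ⊔ d ⊓ c := inf_le_inf_sup_inf_of_sup_inf_sup_eq (by
    rw [sup_comm b, sup_comm d, h, sup_comm])
  rw [inf_comm b a, inf_comm d c] at hbc
  refine le_antisymm ?_
    (sup_le (inf_le_inf le_sup_left le_sup_left) (inf_le_inf le_sup_right le_sup_right))
  rw [inf_sup_right, inf_sup_left, inf_sup_left, inf_comm c b]
  exact sup_le (sup_le le_sup_left had) (sup_le hbc le_sup_right)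

theorem sup_inf_sup_eq_iff_swap :
    (a ⊔ b) ⊓ (c ⊔ d) = a ⊓ c ⊔ b ⊓ d ↔ (a ⊔ c) ⊓ (b ⊔ d) = a ⊓ b ⊔ c ⊓ d :=
  ⟨sup_inf_sup_eq_swap, sup_inf_sup_eq_swap⟩

end

theorem gcomonotone_selfdual {L : Type*} [DistribLattice L] {n : ℕ}
    (x y : Fin n → L) :
    (∀ i j : Fin n, (x i ⊔ y i) ⊓ (x j ⊔ y j) = (x i ⊓ x j) ⊔ (y i ⊓ y j)) ↔
    (∀ i j : Fin n, (x i ⊓ y i) ⊔ (x j ⊓ y j) = (x i ⊔ x j) ⊓ (y i ⊔ y j)) := by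
  exact forall₂_congr fun i j => sup_inf_sup_eq_iff_swap.trans eq_comm
end

section
/- Let a, b, c, d be elements of a distributive lattice satisfying (a ∨ c) ∧ (b ∨ d) = (a ∧ b) ∨ (c ∧ d). Then (a ∧ c) ∨ (b ∧ d) = (a ∨ b) ∧ (c ∨ d). -/
/-!
Expanding both sides by distributivity, `(a ⊔ c) ⊓ (b ⊔ d) = (a ⊓ b) ⊔ (c ⊓ d)` says exactly that the
cross terms `a ⊓ d` and `b ⊓ c` lie below `(a ⊓ b) ⊔ (c ⊓ d)`, and the conclusion says that they lie
below `(a ⊓ c) ⊔ (b ⊓ d)`. Meeting a cross term with `(a ⊓ b) ⊔ (c ⊓ d)` and distributing turns the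
first statement into the second.
-/

section

variable {L : Type*} [DistribLattice L]

theorem le_of_le_sup_of_inf_le {x p q r : L} (h : x ≤ p ⊔ q) (hp : x ⊓ p ≤ r) (hq : x ⊓ q ≤ r) :
    x ≤ r :=
  calc x = x ⊓ (p ⊔ q) := (inf_eq_left.2 h).symm
    _ = x ⊓ p ⊔ x ⊓ q := inf_sup_left _ _ _
    _ ≤ r := sup_le hp hq

theorem sup_inf_sup_eq (a b c d : L) :
    (a ⊔ b) ⊓ (c ⊔ d) = a ⊓ c ⊔ b ⊓ d ⊔ (a ⊓ d ⊔ b ⊓ c) := by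
  rw [inf_sup_left, inf_sup_right, inf_sup_right]
  ac_rfl

theorem sup_inf_sup_eq_iff (a b c d : L) :
    (a ⊔ b) ⊓ (c ⊔ d) = a ⊓ c ⊔ b ⊓ d ↔ a ⊓ d ⊔ b ⊓ c ≤ a ⊓ c ⊔ b ⊓ d := by
  rw [sup_inf_sup_eq, sup_eq_left]

theorem cross_le_of_cross_le {a b c d : L} (h : a ⊓ d ⊔ b ⊓ c ≤ a ⊓ b ⊔ c ⊓ d) :
    a ⊓ d ⊔ b ⊓ c ≤ a ⊓ c ⊔ b ⊓ d :=
  sup_le (le_of_le_sup_of_inf_le (le_sup_left.trans h) (by order) (by order))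
    (le_of_le_sup_of_inf_le (le_sup_right.trans h) (by order) (by order))

end

theorem interchange_selfdual_pointwise {L : Type*} [DistribLattice L]
    (a b c d : L) (h : (a ⊔ c) ⊓ (b ⊔ d) = (a ⊓ b) ⊔ (c ⊓ d)) :
    (a ⊓ c) ⊔ (b ⊓ d) = (a ⊔ b) ⊓ (c ⊔ d) := by
  have hcross : a ⊓ d ⊔ b ⊓ c ≤ a ⊓ b ⊔ c ⊓ d := by
    simpa only [inf_comm c b] using (sup_inf_sup_eq_iff a c b d).1 h
  exact ((sup_inf_sup_eq_iff a b c d).2 (cross_le_of_cross_le hcross)).symm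
end

section
/- Let L be a distributive lattice and x, y ∈ L^n. Then x and y are g-comonotone (the interchange identity holds for every pair of indices) if and only if for every nonempty subset I ⊆ {1,...,n}: ⋀_{i∈I}(x_i ∨ y_i) = (⋀_{i∈I} x_i) ∨ (⋀_{i∈I} y_i). -/
namespace Finset

variable {L ι : Type*} [DistribLattice L]

/-- Since `⨅ᵢ fᵢ ⊔ ⨅ⱼ gⱼ = ⨅ᵢⱼ (fᵢ ⊔ gⱼ)`, it suffices that `⨅ₖ (fₖ ⊔ gₖ) ≤ fᵢ ⊔ gⱼ`, and this
already follows from the interchange identity for the pair `i, j`. -/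
theorem inf'_sup_eq_sup_inf'_of_interchange {s : Finset ι} (hs : s.Nonempty) {f g : ι → L}
    (h : ∀ i ∈ s, ∀ j ∈ s, (f i ⊔ g i) ⊓ (f j ⊔ g j) = (f i ⊓ f j) ⊔ (g i ⊓ g j)) :
    s.inf' hs (fun i => f i ⊔ g i) = s.inf' hs f ⊔ s.inf' hs g := by
  refine le_antisymm ?_ (le_inf' _ _ fun i hi => sup_le_sup (inf'_le _ hi) (inf'_le _ hi))
  rw [inf'_sup_inf']
  refine le_inf' _ _ fun ⟨i, j⟩ hij => ?_
  obtain ⟨hi, hj⟩ := mem_product.mp hij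
  calc s.inf' hs (fun k => f k ⊔ g k)
      ≤ (f i ⊔ g i) ⊓ (f j ⊔ g j) := le_inf (inf'_le _ hi) (inf'_le _ hj)
    _ = (f i ⊓ f j) ⊔ (g i ⊓ g j) := h i hi j hj
    _ ≤ f i ⊔ g j := sup_le_sup inf_le_left inf_le_right

end Finset

theorem gcomonotone_iff_inf_distributes {L : Type*} [DistribLattice L] {n : ℕ}
    (x y : Fin n → L) :
    (∀ i j : Fin n, (x i ⊔ y i) ⊓ (x j ⊔ y j) = (x i ⊓ x j) ⊔ (y i ⊓ y j)) ↔
    (∀ I : Finset (Fin n), ∀ hI : I.Nonempty,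
      I.inf' hI (fun i => x i ⊔ y i) = I.inf' hI x ⊔ I.inf' hI y) := by
  refine ⟨fun h I hI => I.inf'_sup_eq_sup_inf'_of_interchange hI fun i _ j _ => h i j,
    fun h i j => ?_⟩
  simpa [Finset.inf'_insert] using h {i, j} (Finset.insert_nonempty _ _)
end

section
/- Let L be a distributive lattice and x, y ∈ L^n. Then x and y are dually g-comonotone if and only if for every nonempty subset I ⊆ {1,...,n}: ⋁_{i∈I}(x_i ∧ y_i) = (⋁_{i∈I} x_i) ∧ (⋁_{i∈I} y_i). -/
/-!
Expanding `(⨆ x) ⊓ (⨆ y)` by distributivity gives `⨆_{i,j} x i ⊓ y j`, and the pairwise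
identity for `i, j` bounds the mixed term `x i ⊓ y j` by `(x i ⊓ y i) ⊔ (x j ⊓ y j)`.
Conversely, the pairwise identity is the case `I = {i, j}`.
-/

section

variable {ι L : Type*}

theorem inf_le_sup_inf_of_sup_inf_eq [Lattice L] {a b c d : L}
    (h : a ⊓ b ⊔ c ⊓ d = (a ⊔ c) ⊓ (b ⊔ d)) : a ⊓ d ≤ a ⊓ b ⊔ c ⊓ d :=
  h ▸ inf_le_inf le_sup_left le_sup_right

namespace Finset

theorem sup'_inf_le_inf_sup' [Lattice L] (s : Finset ι) (hs : s.Nonempty) (f g : ι → L) :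
    s.sup' hs (fun i => f i ⊓ g i) ≤ s.sup' hs f ⊓ s.sup' hs g :=
  sup'_le _ _ fun _ hi => inf_le_inf (le_sup' f hi) (le_sup' g hi)

theorem sup'_inf_eq_inf_sup'_of_forall_pair [DistribLattice L] {s : Finset ι}
    (hs : s.Nonempty) {f g : ι → L}
    (h : ∀ i ∈ s, ∀ j ∈ s, f i ⊓ g i ⊔ f j ⊓ g j = (f i ⊔ f j) ⊓ (g i ⊔ g j)) :
    s.sup' hs (fun i => f i ⊓ g i) = s.sup' hs f ⊓ s.sup' hs g := by
  refine (sup'_inf_le_inf_sup' s hs f g).antisymm ?_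
  rw [sup'_inf_sup']
  refine sup'_le _ _ fun p hp => ?_
  obtain ⟨hi, hj⟩ := mem_product.1 hp
  exact (inf_le_sup_inf_of_sup_inf_eq (h _ hi _ hj)).trans
    (sup_le (le_sup' (fun i => f i ⊓ g i) hi) (le_sup' (fun i => f i ⊓ g i) hj))

end Finset

end

theorem dual_gcomonotone_iff_sup_distributes {L : Type*} [DistribLattice L] {n : ℕ}
    (x y : Fin n → L) :
    (∀ i j : Fin n, (x i ⊓ y i) ⊔ (x j ⊓ y j) = (x i ⊔ x j) ⊓ (y i ⊔ y j)) ↔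
    (∀ I : Finset (Fin n), ∀ hI : I.Nonempty,
      I.sup' hI (fun i => x i ⊓ y i) = I.sup' hI x ⊓ I.sup' hI y) := by
  constructor
  · intro h I hI
    exact Finset.sup'_inf_eq_inf_sup'_of_forall_pair hI fun i _ j _ => h i j
  · intro h i j
    simpa using h {i, j} (Finset.insert_nonempty i {j})
end

section
/- For every L-valued capacity m on {1,...,n}, the two expressions for the Sugeno integral coincide: ⋁_{I⊆[n]} (m(I) ∧ ⋀_{i∈I} x_i) = ⋀_{I⊆[n]} (m([n]∖I) ∨ ⋁_{i∈I} x_i) for all x ∈ L^n. -/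
/-!
If `I` meets `J` then `⋀_I x ≤ ⋁_J x`, and otherwise `I ⊆ Jᶜ`, so `m I ≤ m Jᶜ` by monotonicity;
this gives `≤`. For `≥` it suffices, by the prime ideal separation theorem, to show that a prime
ideal `P` containing the join form contains the meet form. With `J = {i | x i ∈ P}`, the term of
the join form at `Jᶜ` lies in `P`, and by primality so does `m Jᶜ`, hence also
`m Jᶜ ⊔ ⋁_J x`, which lies above the meet form.
-/

open Finset

namespace Order.Ideal

variable {L ι : Type*}

theorem exists_isPrime_mem_notMem_of_not_le [DistribLattice L] {a b : L} (h : ¬a ≤ b) :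
    ∃ P : Ideal L, P.IsPrime ∧ b ∈ P ∧ a ∉ P := by
  have hdisj : Disjoint (PFilter.principal a : Set L) (principal b : Set L) :=
    Set.disjoint_left.mpr fun _ hac hcb => h (hac.trans hcb)
  obtain ⟨P, hP, hbP, hdisjP⟩ := DistribLattice.prime_ideal_of_disjoint_filter_ideal hdisj
  exact ⟨P, hP, hbP mem_principal_self,
    Set.disjoint_left.mp hdisjP (PFilter.mem_principal.mpr le_rfl)⟩

theorem finset_sup_mem [SemilatticeSup L] [OrderBot L] (P : Ideal L) {s : Finset ι}
    {f : ι → L} (h : ∀ i ∈ s, f i ∈ P) : s.sup f ∈ P :=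
  sup_induction P.bot_mem (fun _ ha _ hb => sup_mem ha hb) h

theorem IsPrime.exists_mem_of_finset_inf_mem [Lattice L] [BoundedOrder L] {P : Ideal L}
    (hP : P.IsPrime) {s : Finset ι} {f : ι → L} (h : s.inf f ∈ P) : ∃ i ∈ s, f i ∈ P := by
  by_contra! hs
  exact inf_induction (p := (· ∉ P)) hP.top_notMem
    (fun _ ha _ hb hab => (hP.mem_or_mem hab).elim ha hb) hs h

end Order.Ideal

section Sugeno

variable {ι L : Type*} [Fintype ι] [DecidableEq ι] [DistribLattice L] [BoundedOrder L]
  {m : Finset ι → L} {x : ι → L}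

theorem inf_inf_le_sup_compl_sup (hm : Monotone m) (I J : Finset ι) :
    m I ⊓ I.inf x ≤ m (univ \ J) ⊔ J.sup x := by
  by_cases hIJ : Disjoint I J
  · exact le_sup_of_le_left (inf_le_left.trans (hm (subset_sdiff.mpr ⟨subset_univ I, hIJ⟩)))
  · obtain ⟨i, hiI, hiJ⟩ := not_disjoint_iff.mp hIJ
    exact le_sup_of_le_right (inf_le_right.trans ((inf_le hiI).trans (le_sup hiJ)))

theorem sup_powerset_inf_le_inf_powerset_compl_sup (hm : Monotone m) :
    univ.powerset.sup (fun I => m I ⊓ I.inf x) ≤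
      univ.powerset.inf (fun J => m (univ \ J) ⊔ J.sup x) :=
  Finset.sup_le fun I _ => Finset.le_inf fun J _ => inf_inf_le_sup_compl_sup hm I J

theorem inf_powerset_compl_sup_le_sup_powerset_inf :
    univ.powerset.inf (fun J => m (univ \ J) ⊔ J.sup x) ≤
      univ.powerset.sup (fun I => m I ⊓ I.inf x) := by
  classical
  by_contra h
  obtain ⟨P, hP, hsupP, hinfP⟩ := Order.Ideal.exists_isPrime_mem_notMem_of_not_le h
  set J := univ.filter fun i => x i ∈ P
  have hmJ : m (univ \ J) ∈ P := by
    have hJc : m (univ \ J) ⊓ (univ \ J).inf x ∈ P :=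
      P.lower (le_sup (f := fun I => m I ⊓ I.inf x) (mem_powerset.mpr sdiff_subset)) hsupP
    refine (hP.mem_or_mem hJc).resolve_right fun hxJc => ?_
    obtain ⟨i, hi, hxi⟩ := hP.exists_mem_of_finset_inf_mem hxJc
    exact (mem_sdiff.mp hi).2 (mem_filter.mpr ⟨mem_univ i, hxi⟩)
  have hxJ : J.sup x ∈ P := P.finset_sup_mem fun i hi => (mem_filter.mp hi).2
  exact hinfP (P.lower (inf_le (f := fun J => m (univ \ J) ⊔ J.sup x)
    (mem_powerset.mpr (subset_univ J))) (P.sup_mem hmJ hxJ))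

end Sugeno

theorem sugeno_two_forms_general {L : Type*} [DistribLattice L] [BoundedOrder L] {n : ℕ}
    (m : Finset (Fin n) → L) (hmono : Monotone m) (x : Fin n → L) :
    (Finset.univ : Finset (Fin n)).powerset.sup (fun I => m I ⊓ I.inf x) =
    (Finset.univ : Finset (Fin n)).powerset.inf
      (fun I => m (Finset.univ \ I) ⊔ I.sup x) :=
  le_antisymm (sup_powerset_inf_le_inf_powerset_compl_sup hmono)
    inf_powerset_compl_sup_le_sup_powerset_inf

theorem sugeno_two_forms {L : Type*} [DistribLattice L] [BoundedOrder L] {n : ℕ}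
    (m : Finset (Fin n) → L) (hmono : Monotone m)
    (h0 : m ∅ = ⊥) (h1 : m Finset.univ = ⊤) (x : Fin n → L) :
    (Finset.univ : Finset (Fin n)).powerset.sup (fun I => m I ⊓ I.inf x) =
    (Finset.univ : Finset (Fin n)).powerset.inf
      (fun I => m (Finset.univ \ I) ⊔ I.sup x) :=
  sugeno_two_forms_general m hmono x
end

section
/- For every L-valued capacity m, the Sugeno integral Su_m is sup-homogeneous (Su_m(c ∨ x) = c ∨ Su_m(x) for all constants c) and g-comonotone infimal (Su_m(x ∧ y) = Su_m(x) ∧ Su_m(y) for all dually g-comonotone x, y). -/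
/-!
Both identities hold term by term in the infimum over `I`. Adding a constant `c` to every
`x i` adds `c` to each term `m (univ \ I) ⊔ ⨆_{i ∈ I} x i` (for `I = ∅` because the term is
`m univ = ⊤`). For the infimal property, distributivity gives
`(⨆_{i ∈ I} x i) ⊓ (⨆_{j ∈ I} y j) = ⨆_{i, j ∈ I} x i ⊓ y j`, and dual g-comonotonicity bounds
each cross term `x i ⊓ y j` by `(x i ⊓ y i) ⊔ (x j ⊓ y j)`.
-/

open Finset

section

variable {ι L : Type*}

def DuallyGComonotone [Lattice L] (x y : ι → L) : Prop :=
  ∀ i j, (x i ⊓ y i) ⊔ (x j ⊓ y j) = (x i ⊔ x j) ⊓ (y i ⊔ y j)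

lemma Finset.sup_const_sup [SemilatticeSup L] [OrderBot L] {s : Finset ι} (hs : s.Nonempty)
    (c : L) (f : ι → L) : s.sup (fun i => c ⊔ f i) = c ⊔ s.sup f :=
  (sup_sup (f := fun _ => c) (g := f)).trans (by rw [sup_const hs])

lemma DuallyGComonotone.sup_inf_sup_le [DistribLattice L] [OrderBot L] {x y : ι → L}
    (h : DuallyGComonotone x y) (s : Finset ι) : s.sup x ⊓ s.sup y ≤ s.sup (x ⊓ y) := by
  rw [sup_inf_sup, Finset.sup_le_iff]
  rintro ⟨i, j⟩ hij
  obtain ⟨hi, hj⟩ := mem_product.mp hij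
  calc x i ⊓ y j ≤ (x i ⊔ x j) ⊓ (y i ⊔ y j) := inf_le_inf le_sup_left le_sup_right
    _ = (x i ⊓ y i) ⊔ (x j ⊓ y j) := (h i j).symm
    _ ≤ s.sup (x ⊓ y) := sup_le (le_sup (f := x ⊓ y) hi) (le_sup (f := x ⊓ y) hj)

section Sugeno

variable [Fintype ι] [DecidableEq ι] [DistribLattice L] [BoundedOrder L]

def sugeno (m : Finset ι → L) (x : ι → L) : L :=
  (univ : Finset ι).powerset.inf fun I => m (univ \ I) ⊔ I.sup x

variable {m : Finset ι → L}

lemma sugeno_mono (m : Finset ι → L) : Monotone (sugeno m) := fun _ _ hxy =>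
  inf_mono_fun fun _ _ => sup_le_sup_left (sup_mono_fun fun i _ => hxy i) _

lemma sugeno_const_sup (h1 : m univ = ⊤) (c : L) (x : ι → L) :
    sugeno m (fun i => c ⊔ x i) = c ⊔ sugeno m x := by
  rw [sugeno, sugeno, inf_sup_distrib_left]
  refine inf_congr rfl fun I _ => ?_
  rcases I.eq_empty_or_nonempty with rfl | hI
  · simp [h1]
  · rw [sup_const_sup hI, sup_left_comm]

lemma sugeno_inf_of_duallyGComonotone (m : Finset ι → L) {x y : ι → L}
    (h : DuallyGComonotone x y) : sugeno m (x ⊓ y) = sugeno m x ⊓ sugeno m y := by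
  refine le_antisymm (le_inf (sugeno_mono m inf_le_left) (sugeno_mono m inf_le_right)) ?_
  refine Finset.le_inf fun I hI => ?_
  calc sugeno m x ⊓ sugeno m y
      ≤ (m (univ \ I) ⊔ I.sup x) ⊓ (m (univ \ I) ⊔ I.sup y) :=
        inf_le_inf (inf_le (f := fun I => m (univ \ I) ⊔ I.sup x) hI)
          (inf_le (f := fun I => m (univ \ I) ⊔ I.sup y) hI)
    _ = m (univ \ I) ⊔ (I.sup x ⊓ I.sup y) := (sup_inf_left _ _ _).symm
    _ ≤ m (univ \ I) ⊔ I.sup (x ⊓ y) := sup_le_sup_left (h.sup_inf_sup_le I) _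

end Sugeno

end

theorem sugeno_sup_homogeneous_and_gcomonotone_infimal_general
    {L : Type*} [DistribLattice L] [BoundedOrder L] {n : ℕ}
    (m : Finset (Fin n) → L) (h1 : m Finset.univ = ⊤) :
    (∀ (c : L) (x : Fin n → L),
      (Finset.univ : Finset (Fin n)).powerset.inf
          (fun I => m (Finset.univ \ I) ⊔ I.sup (fun i => c ⊔ x i)) =
        c ⊔ (Finset.univ : Finset (Fin n)).powerset.inf
          (fun I => m (Finset.univ \ I) ⊔ I.sup x)) ∧
    (∀ x y : Fin n → L,
      (∀ i j : Fin n, (x i ⊓ y i) ⊔ (x j ⊓ y j) = (x i ⊔ x j) ⊓ (y i ⊔ y j)) →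
      (Finset.univ : Finset (Fin n)).powerset.inf
          (fun I => m (Finset.univ \ I) ⊔ I.sup (fun i => x i ⊓ y i)) =
        (Finset.univ : Finset (Fin n)).powerset.inf
          (fun I => m (Finset.univ \ I) ⊔ I.sup x) ⊓
        (Finset.univ : Finset (Fin n)).powerset.inf
          (fun I => m (Finset.univ \ I) ⊔ I.sup y)) :=
  ⟨sugeno_const_sup h1, fun _ _ h => sugeno_inf_of_duallyGComonotone m h⟩

theorem sugeno_sup_homogeneous_and_gcomonotone_infimal
    {L : Type*} [DistribLattice L] [BoundedOrder L] {n : ℕ}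
    (m : Finset (Fin n) → L) (hmono : Monotone m)
    (h0 : m ∅ = ⊥) (h1 : m Finset.univ = ⊤) :
    (∀ (c : L) (x : Fin n → L),
      (Finset.univ : Finset (Fin n)).powerset.inf
          (fun I => m (Finset.univ \ I) ⊔ I.sup (fun i => c ⊔ x i)) =
        c ⊔ (Finset.univ : Finset (Fin n)).powerset.inf
          (fun I => m (Finset.univ \ I) ⊔ I.sup x)) ∧
    (∀ x y : Fin n → L,
      (∀ i j : Fin n, (x i ⊓ y i) ⊔ (x j ⊓ y j) = (x i ⊔ x j) ⊓ (y i ⊔ y j)) →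
      (Finset.univ : Finset (Fin n)).powerset.inf
          (fun I => m (Finset.univ \ I) ⊔ I.sup (fun i => x i ⊓ y i)) =
        (Finset.univ : Finset (Fin n)).powerset.inf
          (fun I => m (Finset.univ \ I) ⊔ I.sup x) ⊓
        (Finset.univ : Finset (Fin n)).powerset.inf
          (fun I => m (Finset.univ \ I) ⊔ I.sup y)) :=
  sugeno_sup_homogeneous_and_gcomonotone_infimal_general m h1
end
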